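/- arXiv:2207.10037 — 2 statements merged into one kernel-verified Lean document; each statement's English description precedes it below -/
import Mathlib

section
/- Let η be a differential k-form on the standard n-simplex σ ⊂ ℝⁿ (with 1 ≤ k ≤ n−1) whose coefficients are affine functions. If the pullback of η to every k-dimensional face of σ vanishes identically, then η is identically zero on σ. -/
open MeasureTheory Finset

/-- A real-valued function on `ℝⁿ` is affine if it has the form `x ↦ ∑ aᵢ xⁱ + b`. -/
def IsAffineFn {n : ℕ} (f : (Fin n → ℝ) → ℝ) : Prop :=
  ∃ (a : Fin n → ℝ) (b : ℝ), ∀ x, f x = (∑ i, a i * x i) + b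

/-- The standard `n`-simplex `{x : xⁱ ≥ 0, ∑ xⁱ ≤ 1}` in `ℝⁿ`. -/
def stdSimp (n : ℕ) : Set (Fin n → ℝ) :=
  {x | (∀ i, 0 ≤ x i) ∧ (∑ i, x i) ≤ 1}

/-- The basic alternating `k`-form `dx^I` (for a strictly increasing multi-index given by a
`k`-element subset `I` of `{1,…,n}`) evaluated on `k` vectors. -/
def dxI {n k : ℕ} (I : {s : Finset (Fin n) // s.card = k}) (v : Fin k → Fin n → ℝ) : ℝ :=
  Matrix.det (Matrix.of fun i j => v j ((I.1.orderIsoOfFin I.2 i : Fin n)))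

/-- The `k`-form `∑_I f_I dx^I` with coefficient functions `f_I`, evaluated at the point `x`
on the `k` vectors `v`. -/
def formEval {n k : ℕ} (f : {s : Finset (Fin n) // s.card = k} → (Fin n → ℝ) → ℝ)
    (x : Fin n → ℝ) (v : Fin k → Fin n → ℝ) : ℝ :=
  ∑ I : {s : Finset (Fin n) // s.card = k}, f I x * dxI I v

/-- The vertices of the standard `n`-simplex: `p₀ = 0`, `pᵢ = eᵢ`. -/
def vert (n : ℕ) : Fin (n+1) → Fin n → ℝ :=
  Fin.cases 0 (fun j => Pi.single j 1)

/-- Affine parametrization of the `k`-face of the standard `n`-simplex with vertex set `S`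
(vertices taken in increasing order), defined on the standard `k`-simplex. -/
def facePt {n k : ℕ} (S : {s : Finset (Fin (n+1)) // s.card = k+1}) (y : Fin k → ℝ) :
    Fin n → ℝ :=
  vert n ((S.1.orderIsoOfFin S.2 0 : Fin (n+1))) +
    ∑ s : Fin k, y s • (vert n ((S.1.orderIsoOfFin S.2 s.succ : Fin (n+1))) -
      vert n ((S.1.orderIsoOfFin S.2 0 : Fin (n+1))))

/-- The differential of the face parametrization `facePt S`. -/
def faceDir {n k : ℕ} (S : {s : Finset (Fin (n+1)) // s.card = k+1}) (w : Fin k → ℝ) :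
    Fin n → ℝ :=
  ∑ s : Fin k, w s • (vert n ((S.1.orderIsoOfFin S.2 s.succ : Fin (n+1))) -
    vert n ((S.1.orderIsoOfFin S.2 0 : Fin (n+1))))

/-- Barycentric coordinates of the standard `n`-simplex: `ν₀ = 1 - ∑ xⁱ`, `νᵢ = xⁱ`. -/
def nu (n : ℕ) (j : Fin (n+1)) (x : Fin n → ℝ) : ℝ :=
  Fin.cases (1 - ∑ i, x i) (fun i => x i) j

/-- The differentials `dνⱼ` of the barycentric coordinates, as linear functionals. -/
def dnu (n : ℕ) (j : Fin (n+1)) (v : Fin n → ℝ) : ℝ :=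
  Fin.cases (-(∑ i, v i)) (fun i => v i) j

/-- The Whitney form `W τ* = k! ∑ⱼ (-1)ʲ ν_{iⱼ} dν_{i₀} ∧ ⋯ ∧ (omit dν_{iⱼ}) ∧ ⋯ ∧ dν_{i_k}`
of the dual cochain of the face with vertex set `S`, evaluated at `x` on the vectors `v`. -/
def whitneyFace {n k : ℕ} (S : {s : Finset (Fin (n+1)) // s.card = k+1})
    (x : Fin n → ℝ) (v : Fin k → Fin n → ℝ) : ℝ :=
  (Nat.factorial k : ℝ) * ∑ j : Fin (k+1), (-1 : ℝ) ^ (j : ℕ) *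
    nu n ((S.1.orderIsoOfFin S.2 j : Fin (n+1))) x *
    Matrix.det (Matrix.of fun (t : Fin k) (m2 : Fin k) =>
      dnu n ((S.1.orderIsoOfFin S.2 (j.succAbove t) : Fin (n+1))) (v m2))

/-- The Whitney map `W`, extended linearly to all real `k`-cochains. -/
def whitney {n k : ℕ} (c : {s : Finset (Fin (n+1)) // s.card = k+1} → ℝ)
    (x : Fin n → ℝ) (v : Fin k → Fin n → ℝ) : ℝ :=
  ∑ S, c S * whitneyFace S x v

/-- The integral of a `k`-form (given by its evaluation function `F`) over the `k`-face with
vertex set `S`, computed via the parametrization `facePt S`. -/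
noncomputable def faceIntegral {n k : ℕ} (S : {s : Finset (Fin (n+1)) // s.card = k+1})
    (F : (Fin n → ℝ) → (Fin k → Fin n → ℝ) → ℝ) : ℝ :=
  ∫ y in stdSimp k, F (facePt S y) (fun s => faceDir S (Pi.single s 1))

/-- A `k`-form (given by its evaluation function) pulls back to a constant form on every
`k`-face of the standard `n`-simplex. -/
def ConstOnFaces {n k : ℕ} (F : (Fin n → ℝ) → (Fin k → Fin n → ℝ) → ℝ) : Prop :=
  ∀ S : {s : Finset (Fin (n+1)) // s.card = k+1}, ∃ cst : ℝ,
    ∀ y ∈ stdSimp k, ∀ w : Fin k → Fin k → ℝ,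
      F (facePt S y) (fun i => faceDir S (w i)) = cst * Matrix.det (Matrix.of fun i j => w j i)

/-!
Write `η = ∑ f_I dx^I`. Since each `f_I` is affine, it suffices that `f_I` vanishes at every
vertex of `σ`. A vertex `p` of a face lies on that face, so `η` at `p` vanishes on differences of
vertices of the face. On the face spanned by `0` and the `e_i`, `i ∈ I`, evaluated on the edges
`e_i`, only `dx^I` survives: `f_I` vanishes at `0` and at `e_i` for `i ∈ I`. For `m ∉ I`,
evaluate at `e_m` on the edges `e_i - e_m` (`i ∈ I`) of the face spanned by `e_m` and the `e_i`:
the coefficients `f_J` with `m ∈ J` already vanish at `e_m`, and every other `dx^J` with `J ≠ I`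
kills these edges, so only `f_I(e_m)` remains.
-/

section
variable {n k : ℕ}

@[simp] lemma vert_zero : vert n 0 = 0 := rfl

@[simp] lemma vert_succ (i : Fin n) : vert n i.succ = Pi.single i 1 := rfl

def faceVertCoord (c : Fin (k+1)) : Fin k → ℝ := fun s => if s.succ = c then 1 else 0

lemma faceVertCoord_mem_stdSimp (c : Fin (k+1)) : faceVertCoord c ∈ stdSimp k := by
  refine ⟨fun s => by unfold faceVertCoord; split_ifs <;> norm_num, ?_⟩
  induction c using Fin.cases with
  | zero => simp [faceVertCoord, Fin.succ_ne_zero]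
  | succ t => simp [faceVertCoord, Fin.succ_inj]

lemma faceDir_faceVertCoord (S : {s : Finset (Fin (n+1)) // s.card = k+1}) (c : Fin (k+1)) :
    faceDir S (faceVertCoord c) =
      vert n (S.1.orderIsoOfFin S.2 c) - vert n (S.1.orderIsoOfFin S.2 0) := by
  induction c using Fin.cases with
  | zero => simp [faceDir, faceVertCoord, Fin.succ_ne_zero]
  | succ t => simp [faceDir, faceVertCoord, Fin.succ_inj]

lemma facePt_faceVertCoord (S : {s : Finset (Fin (n+1)) // s.card = k+1}) (c : Fin (k+1)) :
    facePt S (faceVertCoord c) = vert n (S.1.orderIsoOfFin S.2 c) := by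
  rw [facePt, ← faceDir, faceDir_faceVertCoord, add_sub_cancel]

lemma faceDir_sub (S : {s : Finset (Fin (n+1)) // s.card = k+1}) (w w' : Fin k → ℝ) :
    faceDir S (w - w') = faceDir S w - faceDir S w' := by
  simp [faceDir, sub_smul, Finset.sum_sub_distrib]

lemma exists_facePt_eq_vert (S : {s : Finset (Fin (n+1)) // s.card = k+1}) {a : Fin (n+1)}
    (ha : a ∈ S.1) : ∃ y ∈ stdSimp k, facePt S y = vert n a := by
  obtain ⟨c, hc⟩ := (S.1.orderIsoOfFin S.2).surjective ⟨a, ha⟩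
  exact ⟨faceVertCoord c, faceVertCoord_mem_stdSimp c, by rw [facePt_faceVertCoord, hc]⟩

lemma exists_faceDir_eq_vert_sub_vert (S : {s : Finset (Fin (n+1)) // s.card = k+1})
    {a b : Fin (n+1)} (ha : a ∈ S.1) (hb : b ∈ S.1) :
    ∃ w, faceDir S w = vert n a - vert n b := by
  obtain ⟨ca, hca⟩ := (S.1.orderIsoOfFin S.2).surjective ⟨a, ha⟩
  obtain ⟨cb, hcb⟩ := (S.1.orderIsoOfFin S.2).surjective ⟨b, hb⟩
  refine ⟨faceVertCoord ca - faceVertCoord cb, ?_⟩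
  rw [faceDir_sub, faceDir_faceVertCoord, faceDir_faceVertCoord, hca, hcb]
  abel

def VanishesOnFaces (F : (Fin n → ℝ) → (Fin k → Fin n → ℝ) → ℝ) : Prop :=
  ∀ S : {s : Finset (Fin (n+1)) // s.card = k+1},
    ∀ y ∈ stdSimp k, ∀ w : Fin k → Fin k → ℝ, F (facePt S y) (fun i => faceDir S (w i)) = 0

lemma VanishesOnFaces.apply_vert_sub_vert {F : (Fin n → ℝ) → (Fin k → Fin n → ℝ) → ℝ}
    (hF : VanishesOnFaces F) (S : {s : Finset (Fin (n+1)) // s.card = k+1}) {a : Fin (n+1)}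
    (ha : a ∈ S.1) {b c : Fin k → Fin (n+1)} (hb : ∀ i, b i ∈ S.1) (hc : ∀ i, c i ∈ S.1) :
    F (vert n a) (fun i => vert n (b i) - vert n (c i)) = 0 := by
  obtain ⟨y, hy, hya⟩ := exists_facePt_eq_vert S ha
  choose w hw using fun i => exists_faceDir_eq_vert_sub_vert S (hb i) (hc i)
  simpa [hya, hw] using hF S y hy w

lemma dxI_eq_one {T : {s : Finset (Fin n) // s.card = k}} {v : Fin k → Fin n → ℝ}
    (hv : ∀ i j, v j (T.1.orderEmbOfFin T.2 i) = if i = j then 1 else 0) : dxI T v = 1 := by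
  have hmat : Matrix.of (fun i j => v j (T.1.orderIsoOfFin T.2 i)) = 1 := by
    ext i j
    simp [hv, Matrix.one_apply]
  rw [dxI, hmat, Matrix.det_one]

lemma dxI_eq_zero {I : {s : Finset (Fin n) // s.card = k}} {v : Fin k → Fin n → ℝ} {r : Fin n}
    (hr : r ∈ I.1) (hv : ∀ j, v j r = 0) : dxI I v = 0 := by
  obtain ⟨i, hi⟩ := (I.1.orderIsoOfFin I.2).surjective ⟨r, hr⟩
  exact Matrix.det_eq_zero_of_row_eq_zero i fun j => by simp only [Matrix.of_apply, hi, hv]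

lemma exists_mem_notMem_of_ne {I T : {s : Finset (Fin n) // s.card = k}} (hIT : I ≠ T) :
    ∃ r ∈ I.1, r ∉ T.1 :=
  Finset.not_subset.1 fun hsub =>
    hIT (Subtype.ext (Finset.eq_of_subset_of_card_le hsub (by rw [I.2, T.2])))

lemma ne_orderEmbOfFin_of_notMem {T : Finset (Fin n)} (hT : T.card = k) {r : Fin n} (hr : r ∉ T)
    (j : Fin k) : r ≠ T.orderEmbOfFin hT j :=
  fun h => hr (h ▸ T.orderEmbOfFin_mem hT j)

lemma formEval_eq_coeff {f : {s : Finset (Fin n) // s.card = k} → (Fin n → ℝ) → ℝ}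
    {x : Fin n → ℝ} {v : Fin k → Fin n → ℝ} {T : {s : Finset (Fin n) // s.card = k}}
    (hT : dxI T v = 1) (hI : ∀ I ≠ T, f I x = 0 ∨ dxI I v = 0) :
    formEval f x v = f T x := by
  rw [formEval, Fintype.sum_eq_single T fun I hIT => mul_eq_zero.2 (hI I hIT), hT, mul_one]

lemma IsAffineFn.eq_zero_of_vert {g : (Fin n → ℝ) → ℝ} (hg : IsAffineFn g)
    (hvert : ∀ j, g (vert n j) = 0) : g = 0 := by
  obtain ⟨a, b, hab⟩ := hg
  have hb : b = 0 := by simpa [hab] using hvert 0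
  have ha : ∀ i, a i = 0 := fun i => by simpa [hab, hb, Pi.single_apply] using hvert i.succ
  funext x
  simp [hab, ha, hb]

namespace VanishesOnFaces

variable {f : {s : Finset (Fin n) // s.card = k} → (Fin n → ℝ) → ℝ}

lemma coeff_vert_eq_zero_of_mem (hf : VanishesOnFaces (formEval f))
    (T : {s : Finset (Fin n) // s.card = k}) {a : Fin (n+1)}
    (ha : a ∈ insert 0 (T.1.map (Fin.succEmb n))) : f T (vert n a) = 0 := by
  have hcard : (insert 0 (T.1.map (Fin.succEmb n))).card = k + 1 := by
    rw [Finset.card_insert_of_notMem (by simp), Finset.card_map, T.2]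
  have hedges := hf.apply_vert_sub_vert ⟨_, hcard⟩ ha
    (b := fun i => (T.1.orderEmbOfFin T.2 i).succ) (c := fun _ => 0)
    (fun i => by simp) (fun _ => Finset.mem_insert_self _ _)
  simp only [vert_succ, vert_zero, sub_zero] at hedges
  rwa [formEval_eq_coeff (T := T)] at hedges
  · exact dxI_eq_one fun i j => by simp [Pi.single_apply]
  · intro I hIT
    obtain ⟨r, hrI, hrT⟩ := exists_mem_notMem_of_ne hIT
    exact Or.inr <| dxI_eq_zero hrI fun j =>
      Pi.single_eq_of_ne (ne_orderEmbOfFin_of_notMem T.2 hrT j) _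

lemma coeff_single_eq_zero_of_notMem (hf : VanishesOnFaces (formEval f))
    (T : {s : Finset (Fin n) // s.card = k}) {m : Fin n} (hm : m ∉ T.1) :
    f T (Pi.single m 1) = 0 := by
  have hcard : (insert m.succ (T.1.map (Fin.succEmb n))).card = k + 1 := by
    rw [Finset.card_insert_of_notMem (by simpa using hm), Finset.card_map, T.2]
  have hedges := hf.apply_vert_sub_vert ⟨_, hcard⟩ (Finset.mem_insert_self _ _)
    (b := fun i => (T.1.orderEmbOfFin T.2 i).succ) (c := fun _ => m.succ)
    (fun i => by simp) (fun _ => Finset.mem_insert_self _ _)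
  simp only [vert_succ] at hedges
  rwa [formEval_eq_coeff (T := T)] at hedges
  · exact dxI_eq_one fun i j => by
      simp [Pi.single_apply, (ne_orderEmbOfFin_of_notMem T.2 hm i).symm]
  · intro I hIT
    by_cases hmI : m ∈ I.1
    · left
      simpa using hf.coeff_vert_eq_zero_of_mem I (a := m.succ) (by simpa using hmI)
    · obtain ⟨r, hrI, hrT⟩ := exists_mem_notMem_of_ne hIT
      refine Or.inr (dxI_eq_zero hrI fun j => ?_)
      rw [Pi.sub_apply, Pi.single_eq_of_ne (ne_orderEmbOfFin_of_notMem T.2 hrT j),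
        Pi.single_eq_of_ne (ne_of_mem_of_not_mem hrI hmI), sub_zero]

lemma coeff_vert_eq_zero (hf : VanishesOnFaces (formEval f))
    (T : {s : Finset (Fin n) // s.card = k}) (j : Fin (n+1)) : f T (vert n j) = 0 := by
  induction j using Fin.cases with
  | zero => exact hf.coeff_vert_eq_zero_of_mem T (Finset.mem_insert_self _ _)
  | succ m =>
    by_cases hm : m ∈ T.1
    · exact hf.coeff_vert_eq_zero_of_mem T (by simpa using hm)
    · simpa using hf.coeff_single_eq_zero_of_notMem T hm

end VanishesOnFaces

end

theorem vanishing_pullbacks_imply_zero_general {n k : ℕ}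
    (f : {s : Finset (Fin n) // s.card = k} → (Fin n → ℝ) → ℝ)
    (hf : ∀ I, IsAffineFn (f I))
    (h : ∀ S : {s : Finset (Fin (n+1)) // s.card = k+1},
      ∀ y ∈ stdSimp k, ∀ w : Fin k → Fin k → ℝ,
        formEval f (facePt S y) (fun i => faceDir S (w i)) = 0) :
    ∀ x ∈ stdSimp n, ∀ v : Fin k → Fin n → ℝ, formEval f x v = 0 := by
  intro x _ v
  have hcoeff : ∀ I, f I = 0 := fun I =>
    (hf I).eq_zero_of_vert (VanishesOnFaces.coeff_vert_eq_zero h I)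
  simp [formEval, hcoeff]

/-- A `k`-form with affine coefficients whose pullback to every `k`-face of the standard
`n`-simplex vanishes identically is identically zero on the simplex. -/
theorem vanishing_pullbacks_imply_zero {n k : ℕ} (hk : 1 ≤ k) (hkn : k ≤ n - 1)
    (f : {s : Finset (Fin n) // s.card = k} → (Fin n → ℝ) → ℝ)
    (hf : ∀ I, IsAffineFn (f I))
    (h : ∀ S : {s : Finset (Fin (n+1)) // s.card = k+1},
      ∀ y ∈ stdSimp k, ∀ w : Fin k → Fin k → ℝ,
        formEval f (facePt S y) (fun i => faceDir S (w i)) = 0) :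
    ∀ x ∈ stdSimp n, ∀ v : Fin k → Fin n → ℝ, formEval f x v = 0 :=
  vanishing_pullbacks_imply_zero_general f hf h
end

section
/- For every k-face τ of the standard n-simplex σ and every k-face τ′, the integral over τ′ of the Whitney form Wτ* equals 1 if τ′ = τ and 0 otherwise; that is, the de Rham map R satisfies R∘W = id on k-cochains. -/
/-! On a `k`-face `τ'`, the barycentric coordinates `νᵢ` of `σ` pull back to the barycentric
coordinates `λⱼ` of the standard `k`-simplex when `i` is the `j`-th vertex of `τ'`, and to `0`
when `i` is not a vertex of `τ'`; the same holds for the `dνᵢ`.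

If `τ ≠ τ'`, some vertex `i` of `τ` is not a vertex of `τ'`, and every term of `Wτ*` contains
either `νᵢ` or `dνᵢ`, so `Wτ*` pulls back to `0` on `τ'`.

If `τ = τ'`, expanding along the first column shows that the pullback of `Wτ*` is `k!` times the
determinant of the matrix with rows `(λⱼ, dλⱼ(e₁), …, dλⱼ(eₖ))`. These rows sum to
`(1, 0, …, 0)`, because `∑ λⱼ = 1` and `∑ dλⱼ = 0`, so the determinant is `1`. Since the
standard `k`-simplex has volume `1 / k!`, the integral is `1`. -/

open MeasureTheory Finset

open scoped Nat

def cornerSimplex (k : ℕ) (c : ℝ) : Set (Fin k → ℝ) := {x | (∀ i, 0 ≤ x i) ∧ ∑ i, x i ≤ c}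

lemma cornerSimplex_eq_empty {k : ℕ} {c : ℝ} (hc : c < 0) : cornerSimplex k c = ∅ := by
  refine Set.eq_empty_of_forall_notMem fun x ⟨hx, hsum⟩ => ?_
  linarith [Finset.sum_nonneg fun i (_ : i ∈ univ) => hx i]

lemma measurableSet_cornerSimplex (k : ℕ) (c : ℝ) : MeasurableSet (cornerSimplex k c) := by
  unfold cornerSimplex
  measurability

lemma cons_mem_cornerSimplex {k : ℕ} {c x : ℝ} {v : Fin k → ℝ} :
    (Fin.cons x v : Fin (k+1) → ℝ) ∈ cornerSimplex (k+1) c ↔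
      0 ≤ x ∧ v ∈ cornerSimplex k (c - x) := by
  simp only [cornerSimplex, Set.mem_ofPred_eq, Fin.forall_fin_succ, Fin.sum_univ_succ,
    Fin.cons_zero, Fin.cons_succ, and_assoc, le_sub_iff_add_le']

lemma volume_cons_preimage_cornerSimplex {k : ℕ} {c : ℝ}
    (ih : ∀ {c'}, 0 ≤ c' → volume (cornerSimplex k c') = ENNReal.ofReal (c' ^ k / k !)) (x : ℝ) :
    volume {v : Fin k → ℝ | (Fin.cons x v : Fin (k+1) → ℝ) ∈ cornerSimplex (k+1) c} =
      (Set.Icc 0 c).indicator (fun x => ENNReal.ofReal ((c - x) ^ k / k !)) x := by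
  simp only [cons_mem_cornerSimplex]
  by_cases hx : x ∈ Set.Icc 0 c
  · simp [hx.1, Set.indicator_of_mem hx, ih (sub_nonneg.2 hx.2)]
  · rw [Set.indicator_of_notMem hx]
    rcases lt_or_ge x 0 with hx0 | hx0
    · simp [not_le.2 hx0]
    · have : c - x < 0 := by simp [Set.mem_Icc, hx0] at hx; linarith
      simp [cornerSimplex_eq_empty this]

lemma integral_sub_pow_div_factorial (k : ℕ) (c : ℝ) :
    ∫ x in (0:ℝ)..c, (c - x) ^ k / k ! = c ^ (k+1) / (k+1) ! := by
  rw [intervalIntegral.integral_div, intervalIntegral.integral_comp_sub_left (fun u => u ^ k) c,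
    sub_self, sub_zero, integral_pow, Nat.factorial_succ, Nat.cast_mul]
  have := Nat.factorial_pos k
  field_simp
  simp

lemma volume_cornerSimplex (k : ℕ) {c : ℝ} (hc : 0 ≤ c) :
    volume (cornerSimplex k c) = ENNReal.ofReal (c ^ k / k !) := by
  induction k generalizing c with
  | zero =>
    have : cornerSimplex 0 c = Set.univ := by ext x; simp [cornerSimplex, hc]
    rw [this, volume_pi, Measure.pi_univ]
    simp
  | succ k ih =>
    have hpres := (volume_preserving_piFinSuccAbove (fun _ : Fin (k+1) => ℝ) 0).symm
    have hnn : ∀ x ∈ Set.Icc 0 c, 0 ≤ (c - x) ^ k / k ! := fun x hx =>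
      div_nonneg (pow_nonneg (sub_nonneg.2 hx.2) k) (Nat.cast_nonneg _)
    rw [← hpres.measure_preimage (measurableSet_cornerSimplex _ _).nullMeasurableSet,
      Measure.volume_eq_prod, Measure.prod_apply
        ((measurableSet_cornerSimplex _ _).preimage (MeasurableEquiv.measurable _))]
    simp only [Set.preimage, MeasurableEquiv.piFinSuccAbove_symm_apply, Fin.insertNthEquiv,
      Equiv.coe_fn_mk, Set.mem_ofPred_eq, Fin.insertNth_zero']
    simp_rw [volume_cons_preimage_cornerSimplex ih]
    rw [lintegral_indicator measurableSet_Icc, ← ofReal_integral_eq_lintegral_ofReal,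
      integral_Icc_eq_integral_Ioc, ← intervalIntegral.integral_of_le hc,
      integral_sub_pow_div_factorial]
    · exact (Continuous.integrableOn_Icc (by fun_prop))
    · exact (ae_restrict_iff' measurableSet_Icc).2 (ae_of_all _ hnn)

lemma volume_real_stdSimp (k : ℕ) : volume.real (stdSimp k) = (k ! : ℝ)⁻¹ := by
  rw [measureReal_def, show stdSimp k = cornerSimplex k 1 from rfl,
    volume_cornerSimplex k zero_le_one, ENNReal.toReal_ofReal (by positivity), one_pow, one_div]

section Barycentric

variable {n : ℕ}

def dnuLinear (n : ℕ) (i : Fin (n+1)) : (Fin n → ℝ) →ₗ[ℝ] ℝ where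
  toFun := dnu n i
  map_add' u v := by
    induction i using Fin.cases <;> simp [dnu, Finset.sum_add_distrib]; ring
  map_smul' c v := by
    induction i using Fin.cases <;> simp [dnu, Finset.mul_sum]

@[simp] lemma dnuLinear_apply (i : Fin (n+1)) (v : Fin n → ℝ) : dnuLinear n i v = dnu n i v := rfl

lemma nu_add (i : Fin (n+1)) (x v : Fin n → ℝ) : nu n i (x + v) = nu n i x + dnu n i v := by
  induction i using Fin.cases <;> simp [nu, dnu, Finset.sum_add_distrib]; ring

lemma nu_vert (i j : Fin (n+1)) : nu n i (vert n j) = if i = j then 1 else 0 := by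
  induction i using Fin.cases <;> induction j using Fin.cases <;>
    simp [nu, vert, Pi.single_apply, Fin.succ_ne_zero, eq_comm]

lemma dnu_vert (i j : Fin (n+1)) :
    dnu n i (vert n j) = (if i = j then 1 else 0) - if i = 0 then 1 else 0 := by
  induction i using Fin.cases <;> induction j using Fin.cases <;>
    simp [dnu, vert, Pi.single_apply, Fin.succ_ne_zero, eq_comm]

lemma nu_eq_add_dnu (i : Fin (n+1)) (x : Fin n → ℝ) :
    nu n i x = (if i = 0 then 1 else 0) + dnu n i x := by
  induction i using Fin.cases <;> simp [nu, dnu, Fin.succ_ne_zero]; ring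

lemma dnu_eq_sum (i : Fin (n+1)) (w : Fin n → ℝ) :
    dnu n i w = ∑ s, w s * ((if i = s.succ then 1 else 0) - if i = 0 then 1 else 0) := by
  induction i using Fin.cases <;> simp [dnu, Fin.succ_ne_zero, Fin.succ_inj, eq_comm]

lemma sum_nu (x : Fin n → ℝ) : ∑ j, nu n j x = 1 := by
  simp [Fin.sum_univ_succ, nu]

lemma sum_dnu (v : Fin n → ℝ) : ∑ j, dnu n j v = 0 := by
  simp [Fin.sum_univ_succ, dnu]

end Barycentric

section Face

variable {n k : ℕ} (T : {s : Finset (Fin (n+1)) // s.card = k+1})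

lemma dnu_faceDir (i : Fin (n+1)) (w : Fin k → ℝ) :
    dnu n i (faceDir T w) = ∑ s, w s * ((if i = T.1.orderEmbOfFin T.2 s.succ then 1 else 0) -
      if i = T.1.orderEmbOfFin T.2 0 then 1 else 0) := by
  rw [← dnuLinear_apply]
  simp only [faceDir, coe_orderIsoOfFin_apply, map_sum, map_smul, map_sub, dnuLinear_apply,
    dnu_vert, smul_eq_mul]
  congr! 2
  ring

lemma nu_facePt (i : Fin (n+1)) (y : Fin k → ℝ) :
    nu n i (facePt T y) =
      (if i = T.1.orderEmbOfFin T.2 0 then 1 else 0) + dnu n i (faceDir T y) := by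
  rw [facePt, ← faceDir, nu_add, nu_vert, coe_orderIsoOfFin_apply]

lemma dnu_faceDir_vertex (j : Fin (k+1)) (w : Fin k → ℝ) :
    dnu n (T.1.orderEmbOfFin T.2 j) (faceDir T w) = dnu k j w := by
  simp only [dnu_faceDir, (T.1.orderEmbOfFin T.2).injective.eq_iff, dnu_eq_sum j w]

lemma nu_facePt_vertex (j : Fin (k+1)) (y : Fin k → ℝ) :
    nu n (T.1.orderEmbOfFin T.2 j) (facePt T y) = nu k j y := by
  simp only [nu_facePt, dnu_faceDir_vertex, (T.1.orderEmbOfFin T.2).injective.eq_iff,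
    nu_eq_add_dnu j y]

variable {T} {i : Fin (n+1)}

lemma ne_orderEmbOfFin_of_notMem_s13 (hi : i ∉ T.1) (j : Fin (k+1)) : i ≠ T.1.orderEmbOfFin T.2 j :=
  fun h => hi (h ▸ orderEmbOfFin_mem _ _ j)

lemma dnu_faceDir_of_notMem (hi : i ∉ T.1) (w : Fin k → ℝ) : dnu n i (faceDir T w) = 0 := by
  simp [dnu_faceDir, ne_orderEmbOfFin_of_notMem_s13 hi]

lemma nu_facePt_of_notMem (hi : i ∉ T.1) (y : Fin k → ℝ) : nu n i (facePt T y) = 0 := by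
  simp [nu_facePt, dnu_faceDir_of_notMem hi, ne_orderEmbOfFin_of_notMem_s13 hi]

end Face

section Whitney

variable {n k : ℕ}

lemma det_cons_nu_dnu (y : Fin k → ℝ) :
    (Matrix.of fun j : Fin (k+1) =>
      (Fin.cons (nu k j y) fun m => dnu k j (Pi.single m 1) : Fin (k+1) → ℝ)).det = 1 := by
  set E : Matrix (Fin (k+1)) (Fin (k+1)) ℝ :=
    Matrix.of fun j => Fin.cons (nu k j y) fun m => dnu k j (Pi.single m 1)
  have hrows : (∑ j, E j : Fin (k+1) → ℝ) = Pi.single 0 1 := by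
    ext m
    rw [Finset.sum_apply m univ (fun j => E j)]
    induction m using Fin.cases <;> simp [E, sum_nu, sum_dnu]
  have hminor : E.submatrix Fin.succ Fin.succ = 1 := by
    ext i m
    simp [E, dnu, Matrix.one_apply, Pi.single_apply]
  calc E.det = (E.updateRow 0 (∑ j, E j)).det := by
        simpa using (Matrix.det_updateRow_sum E 0 1).symm
    _ = (E.submatrix Fin.succ Fin.succ).det := by
      rw [hrows, Matrix.det_succ_row_zero, Fin.sum_univ_succ]
      have hsub : (E.updateRow 0 (Pi.single 0 1)).submatrix Fin.succ Fin.succ =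
          E.submatrix Fin.succ Fin.succ :=
        Matrix.submatrix_updateRow_succAbove E _ _ 0
      simp [Fin.succ_ne_zero, hsub]
    _ = 1 := by rw [hminor, Matrix.det_one]

lemma whitneyFace_facePt_self (T : {s : Finset (Fin (n+1)) // s.card = k+1}) (y : Fin k → ℝ) :
    whitneyFace T (facePt T y) (fun m => faceDir T (Pi.single m 1)) = k ! := by
  conv_rhs => rw [← mul_one (k ! : ℝ), ← det_cons_nu_dnu y, Matrix.det_succ_column_zero]
  simp only [whitneyFace, coe_orderIsoOfFin_apply, nu_facePt_vertex, dnu_faceDir_vertex]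
  rfl

lemma whitneyFace_facePt_of_not_subset {S T : {s : Finset (Fin (n+1)) // s.card = k+1}}
    (hST : ¬ S.1 ⊆ T.1) (y : Fin k → ℝ) (w : Fin k → Fin k → ℝ) :
    whitneyFace S (facePt T y) (fun m => faceDir T (w m)) = 0 := by
  obtain ⟨i, hiS, hiT⟩ := not_subset.1 hST
  obtain ⟨j₀, rfl⟩ : ∃ j₀, S.1.orderEmbOfFin S.2 j₀ = i :=
    ⟨(S.1.orderIsoOfFin S.2).symm ⟨i, hiS⟩, by simp [← coe_orderIsoOfFin_apply]⟩
  simp only [whitneyFace, coe_orderIsoOfFin_apply]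
  refine mul_eq_zero_of_right _ (sum_eq_zero fun j _ => ?_)
  rcases eq_or_ne j j₀ with rfl | hj
  · rw [nu_facePt_of_notMem hiT, mul_zero, zero_mul]
  · obtain ⟨t, rfl⟩ := Fin.exists_succAbove_eq hj.symm
    rw [Matrix.det_eq_zero_of_row_eq_zero t fun m => dnu_faceDir_of_notMem hiT _, mul_zero]

end Whitney

section FaceIntegral

variable {n k : ℕ}

lemma faceIntegral_whitneyFace_self (T : {s : Finset (Fin (n+1)) // s.card = k+1}) :
    faceIntegral T (whitneyFace T) = 1 := by
  simp only [faceIntegral, whitneyFace_facePt_self, setIntegral_const, volume_real_stdSimp,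
    smul_eq_mul]
  exact inv_mul_cancel₀ (Nat.cast_ne_zero.2 k.factorial_ne_zero)

lemma faceIntegral_whitneyFace_of_ne {S T : {s : Finset (Fin (n+1)) // s.card = k+1}}
    (hTS : T ≠ S) : faceIntegral T (whitneyFace S) = 0 := by
  have hST : ¬ S.1 ⊆ T.1 := fun h =>
    hTS (Subtype.ext (eq_of_subset_of_card_le h (by rw [S.2, T.2])).symm)
  simp [faceIntegral, whitneyFace_facePt_of_not_subset hST]

end FaceIntegral

/-- `R ∘ W = id`: the integral of `Wτ*` over a `k`-face `τ′` is `1` if `τ′ = τ` and `0` else. -/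
theorem deRham_whitney_id {n k : ℕ}
    (S T : {s : Finset (Fin (n+1)) // s.card = k+1}) :
    faceIntegral T (whitneyFace S) = if T = S then 1 else 0 := by
  split_ifs with hTS
  · subst hTS
    exact faceIntegral_whitneyFace_self T
  · exact faceIntegral_whitneyFace_of_ne hTS
end
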